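/- The Stieltjes transform m of the semicircle law is complex differentiable on the upper half plane and satisfies m'(z) = m(z)²/(1 - m(z)²) for every z with Im z > 0. -/

import Mathlib

open MeasureTheory

/-- The Stieltjes transform of the semicircle law,
`m(z) = ∫_{-2}^{2} √(4-x²)/(2π (x - z)) dx`. -/
noncomputable def mSC (z : ℂ) : ℂ :=
  ∫ x in (-2 : ℝ)..2, (Real.sqrt (4 - x ^ 2) / (2 * Real.pi) : ℂ) / ((x : ℂ) - z)

open Complex Real intervalIntegral Metric

noncomputable def uSC (z : ℂ) : ℂ := (1 - 4 / z ^ 2) ^ ((2:ℂ)⁻¹)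

lemma uSC_sq (z : ℂ) : uSC z ^ 2 = 1 - 4 / z ^ 2 := by
  simp only [uSC]
  exact Complex.cpow_ofNat_inv_pow (1 - 4 / z^2) 2

lemma im_w0 (z : ℂ) : (1 - 4 / z ^ 2).im = 8 * z.re * z.im / Complex.normSq (z^2) := by
  simp [Complex.div_im, Complex.normSq_apply, pow_two, Complex.mul_im, Complex.mul_re]
  ring

lemma re_w0 (z : ℂ) : (1 - 4 / z ^ 2).re = 1 - 4 * (z.re^2 - z.im^2) / Complex.normSq (z^2) := by
  simp [Complex.div_re, Complex.normSq_apply, pow_two, Complex.mul_im, Complex.mul_re]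

lemma w0_slit (z : ℂ) (hz : 0 < z.im) : (1 - 4 / z ^ 2) ∈ Complex.slitPlane := by
  have hz0 : z ≠ 0 := fun h => by simp [h] at hz
  rw [Complex.mem_slitPlane_iff]
  rcases eq_or_ne z.re 0 with hre | hre
  · left
    rw [re_w0]
    have hns : Complex.normSq (z^2) = z.im^4 := by
      simp [Complex.normSq_apply, pow_two, Complex.mul_re, Complex.mul_im, hre]; ring
    rw [hns, hre]
    have him : z.im ≠ 0 := hz.ne'
    have h4 : 4 * ((0:ℝ)^2 - z.im^2)/z.im^4 = -(4/z.im^2) := by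
      field_simp; ring
    rw [h4, sub_neg_eq_add]
    positivity
  · right
    rw [im_w0]
    have hns : (0:ℝ) < Complex.normSq (z^2) := by
      rw [Complex.normSq_pos]; exact pow_ne_zero 2 hz0
    intro h
    rcases div_eq_zero_iff.mp h with h' | h'
    · rcases mul_eq_zero.mp h' with h'' | h''
      · rcases mul_eq_zero.mp h'' with h3 | h3
        · norm_num at h3
        · exact hre h3
      · exact hz.ne' h''
    · exact hns.ne' h'

lemma uSC_re_im (z : ℂ) (hz : 0 < z.im) :
    (uSC z).re = Real.exp ((Complex.log (1-4/z^2)).re * 2⁻¹) * Real.cos ((1-4/z^2).arg / 2) ∧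
    (uSC z).im = Real.exp ((Complex.log (1-4/z^2)).re * 2⁻¹) * Real.sin ((1-4/z^2).arg / 2) := by
  have hw0 : (1 - 4/z^2 : ℂ) ≠ 0 := by
    intro h
    have := w0_slit z hz
    rw [h] at this
    simp [Complex.mem_slitPlane_iff] at this
  have hu : uSC z = Complex.exp (Complex.log (1 - 4/z^2) * (2:ℂ)⁻¹) := by
    rw [uSC, Complex.cpow_def_of_ne_zero hw0]
  have him : (Complex.log (1 - 4/z^2) * (2:ℂ)⁻¹).im = (1-4/z^2).arg / 2 := by
    simp [Complex.mul_im, Complex.log_im]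
    ring
  have hre : (Complex.log (1 - 4/z^2) * (2:ℂ)⁻¹).re = (Complex.log (1-4/z^2)).re * 2⁻¹ := by
    simp [Complex.mul_re]
  rw [hu]
  rw [Complex.exp_re, Complex.exp_im, him, hre]
  exact ⟨rfl, rfl⟩

lemma uSC_re_pos (z : ℂ) (hz : 0 < z.im) : 0 < (uSC z).re := by
  rw [(uSC_re_im z hz).1]
  apply mul_pos (Real.exp_pos _)
  apply Real.cos_pos_of_mem_Ioo
  have h1 := Complex.neg_pi_lt_arg (1 - 4/z^2)
  have h2 := Complex.arg_le_pi (1 - 4/z^2)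
  have h3 : (1-4/z^2 : ℂ).arg ≠ π := (Complex.mem_slitPlane_iff_arg.mp (w0_slit z hz)).1
  constructor <;> [skip; skip] <;>
  · skip
    cases' lt_or_eq_of_le h2 with h h
    · linarith
    · exact absurd h h3

lemma re_mul_im_uSC_nonneg (z : ℂ) (hz : 0 < z.im) : 0 ≤ z.re * (uSC z).im := by
  have hz0 : z ≠ 0 := fun h => by simp [h] at hz
  have hns : (0:ℝ) < Complex.normSq (z^2) := by
    rw [Complex.normSq_pos]; exact pow_ne_zero 2 hz0
  have h1 := Complex.neg_pi_lt_arg (1 - 4/z^2)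
  have h2 : (1-4/z^2 : ℂ).arg < π := by
    have h2' := Complex.arg_le_pi (1 - 4/z^2)
    have h3 : (1-4/z^2 : ℂ).arg ≠ π := (Complex.mem_slitPlane_iff_arg.mp (w0_slit z hz)).1
    exact lt_of_le_of_ne h2' h3
  rw [(uSC_re_im z hz).2]
  rcases lt_trichotomy z.re 0 with hre | hre | hre
  · -- z.re < 0 : arg < 0, sin(arg/2) ≤ 0
    have himw : (1 - 4/z^2 : ℂ).im < 0 := by
      rw [im_w0]
      apply div_neg_of_neg_of_pos _ hns
      nlinarith
    have harg : (1-4/z^2 : ℂ).arg < 0 := Complex.arg_neg_iff.mpr himw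
    have hsin : Real.sin ((1-4/z^2).arg / 2) ≤ 0 := by
      apply Real.sin_nonpos_of_nonpos_of_neg_pi_le (by linarith) (by linarith)
    have : (Real.exp ((Complex.log (1-4/z^2)).re * 2⁻¹) * Real.sin ((1-4/z^2).arg / 2)) ≤ 0 :=
      mul_nonpos_of_nonneg_of_nonpos (Real.exp_pos _).le hsin
    nlinarith
  · simp [hre]
  · have himw : 0 ≤ (1 - 4/z^2 : ℂ).im := by
      rw [im_w0]; positivity
    have harg : 0 ≤ (1-4/z^2 : ℂ).arg := Complex.arg_nonneg_iff.mpr himw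
    have hsin : 0 ≤ Real.sin ((1-4/z^2).arg / 2) := by
      apply Real.sin_nonneg_of_nonneg_of_le_pi (by linarith) (by linarith)
    positivity

lemma im_zu_pos (z : ℂ) (hz : 0 < z.im) : 0 < (z * uSC z).im := by
  rw [Complex.mul_im]
  have h1 := re_mul_im_uSC_nonneg z hz
  have h2 := mul_pos hz (uSC_re_pos z hz)
  linarith

lemma zu_sq (z : ℂ) (hz : 0 < z.im) : (z * uSC z)^2 = z^2 - 4 := by
  have hz0 : z ≠ 0 := fun h => by simp [h] at hz
  have h := uSC_sq z
  have : (z * uSC z)^2 = z^2 * (1 - 4/z^2) := by rw [mul_pow, h]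
  rw [this]
  field_simp

lemma ab_eq_one (z : ℂ) (hz : 0 < z.im) :
    ((z - z * uSC z)/2) * ((z + z * uSC z)/2) = 1 := by
  have h := zu_sq z hz
  linear_combination (-1/4 : ℂ) * h

lemma abs_b_gt (z : ℂ) (hz : 0 < z.im) : 1 < ‖(z + z * uSC z)/2‖ := by
  set b := (z + z * uSC z)/2 with hb
  set a := (z - z * uSC z)/2 with ha
  have hab : a * b = 1 := ab_eq_one z hz
  have hbim : 0 < b.im := by
    have h1 := im_zu_pos z hz
    have : b.im = (z.im + (z * uSC z).im)/2 := by
      rw [hb]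
      simp [Complex.div_im, Complex.add_im, Complex.normSq_apply]
    rw [this]
    linarith
  have hb0 : b ≠ 0 := fun h => by simp [h] at hbim
  have haeq : a = b⁻¹ := by field_simp at hab ⊢; linear_combination hab
  have haim : a.im = -b.im / Complex.normSq b := by rw [haeq, Complex.inv_im]
  have hzab : z.im = a.im + b.im := by
    have : z = a + b := by rw [ha, hb]; ring
    rw [this, Complex.add_im]
  have hns : 0 < Complex.normSq b := Complex.normSq_pos.mpr hb0
  have hgt : 1 < Complex.normSq b := by
    rw [haim] at hzab
    have h5 : 0 < z.im * Complex.normSq b := mul_pos hz hns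
    rw [hzab] at h5
    have h6 : (-b.im/Complex.normSq b + b.im) * Complex.normSq b
        = b.im * (Complex.normSq b - 1) := by
      field_simp; ring
    rw [h6] at h5
    nlinarith
  have : ‖b‖ ^ 2 = Complex.normSq b := by
    rw [Complex.sq_norm]
  nlinarith [norm_nonneg b, this]

lemma abs_a_lt (z : ℂ) (hz : 0 < z.im) : ‖(z - z * uSC z)/2‖ < 1 := by
  have hab : ((z - z * uSC z)/2) * ((z + z * uSC z)/2) = 1 := ab_eq_one z hz
  have hb := abs_b_gt z hz
  have := congrArg norm hab
  rw [norm_mul, norm_one] at this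
  nlinarith [norm_nonneg ((z - z * uSC z)/2)]

lemma uSC_ne_zero (z : ℂ) (hz : 0 < z.im) : uSC z ≠ 0 := by
  intro h
  have h2 := uSC_sq z
  rw [h] at h2
  have := w0_slit z hz
  rw [← h2] at this
  simp [Complex.mem_slitPlane_iff] at this

lemma hasDerivAt_gFun (z : ℂ) (hz : 0 < z.im) :
    HasDerivAt (fun w : ℂ => (w * (1 - 4 / w ^ 2) ^ ((2:ℂ)⁻¹) - w)/2)
      ((1 - uSC z)/(2 * uSC z)) z := by
  have hz0 : z ≠ 0 := fun h => by simp [h] at hz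
  have hz2 : z^2 ≠ 0 := pow_ne_zero 2 hz0
  have hd0 : HasDerivAt (fun w : ℂ => 1 - 4 / w ^ 2) (8 / z^3) z := by
    have h1 : HasDerivAt (fun w : ℂ => w^2) (2*z) z := by
      simpa using hasDerivAt_pow 2 z
    have h2 := (h1.inv hz2).const_mul (4:ℂ)
    have h3 := h2.const_sub 1
    have h3' : HasDerivAt (fun w : ℂ => 1 - 4 / w ^ 2) (-(4 * (-(2*z)/(z^2)^2))) z := by
      simpa only [div_eq_mul_inv, Pi.inv_apply] using h3
    convert h3' using 1
    field_simp
    ring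
  have hslit := w0_slit z hz
  have hd1 := hd0.cpow_const (c := (2:ℂ)⁻¹) hslit
  have hd2 := (hasDerivAt_id z).mul hd1
  have hd3 := (hd2.sub (hasDerivAt_id z)).div_const 2
  refine hd3.congr_deriv ?_
  symm
  have hu0 : uSC z ≠ 0 := uSC_ne_zero z hz
  have hexp : (1 - 4/z^2 : ℂ) ^ ((2:ℂ)⁻¹ - 1) = (uSC z)⁻¹ := by
    have : ((2:ℂ)⁻¹ - 1) = -(2:ℂ)⁻¹ := by norm_num
    rw [this, Complex.cpow_neg]
    rfl
  rw [hexp]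
  have husq := uSC_sq z
  rw [show (1 - 4/z^2 : ℂ) ^ ((2:ℂ)⁻¹) = uSC z from rfl]
  field_simp
  have hzi : z * z⁻¹ = 1 := mul_inv_cancel₀ hz0
  ring_nf
  simp only [id_eq]
  linear_combination (-2 * z^3 : ℂ) * husq + (8 * z * (z * z⁻¹ + 1)) * hzi

lemma denom_ne (z : ℂ) (hz : 0 < z.im) (x : ℝ) : (x:ℂ) - z ≠ 0 := by
  intro h
  have := congrArg Complex.im h
  simp at this
  exact hz.ne' this

lemma subst_lemma (z : ℂ) (hz : 0 < z.im) :
    ∫ x in (-2:ℝ)..2, (Real.sqrt (4 - x^2) : ℂ)/((x:ℂ) - z)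
      = ∫ θ in (0:ℝ)..π, 4*(Real.sin θ : ℂ)^2/(2*(Real.cos θ : ℂ) - z) := by
  set g : ℝ → ℂ := fun x => (Real.sqrt (4 - x^2) : ℂ)/((x:ℂ) - z) with hgdef
  have hgc : Continuous g := by
    apply Continuous.div
    · exact Complex.continuous_ofReal.comp (Real.continuous_sqrt.comp (by continuity))
    · continuity
    · exact fun x => denom_ne z hz x
  have hderiv : ∀ θ ∈ Set.uIcc (0:ℝ) π, HasDerivAt (fun t => 2*Real.cos t) (-2*Real.sin θ) θ := by
    intro θ _
    have := (Real.hasDerivAt_cos θ).const_mul (2:ℝ)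
    simpa [mul_comm] using this
  have hcont : ContinuousOn (fun θ => -2*Real.sin θ) (Set.uIcc (0:ℝ) π) := by
    apply Continuous.continuousOn; continuity
  have hsub := intervalIntegral.integral_comp_smul_deriv hderiv hcont hgc
  have h2 : (2:ℝ)*Real.cos 0 = 2 := by simp
  have h3 : (2:ℝ)*Real.cos π = -2 := by simp
  rw [h2, h3] at hsub
  have h4 : (∫ x in (2:ℝ)..(-2), g x) = - ∫ x in (-2:ℝ)..2, g x :=
    intervalIntegral.integral_symm _ _
  rw [h4] at hsub
  have h5 : (∫ θ in (0:ℝ)..π, (-2*Real.sin θ) • (g ∘ (fun t => 2*Real.cos t)) θ)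
      = - ∫ θ in (0:ℝ)..π, 4*(Real.sin θ : ℂ)^2/(2*(Real.cos θ : ℂ) - z) := by
    rw [← intervalIntegral.integral_neg]
    apply intervalIntegral.integral_congr
    intro θ hθ
    rw [Set.uIcc_of_le Real.pi_pos.le] at hθ
    have hsin : 0 ≤ Real.sin θ := Real.sin_nonneg_of_nonneg_of_le_pi hθ.1 hθ.2
    have hsq : 4 - (2*Real.cos θ)^2 = (2*Real.sin θ)^2 := by
      have := Real.sin_sq_add_cos_sq θ; nlinarith
    simp only [Function.comp, hgdef]
    rw [hsq, Real.sqrt_sq (by positivity)]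
    rw [Complex.real_smul]
    push_cast
    ring
  rw [h5] at hsub
  exact (neg_inj.mp hsub).symm

lemma denom2_ne (z : ℂ) (hz : 0 < z.im) (c : ℝ) : 2*(c:ℂ) - z ≠ 0 := by
  intro h
  have := congrArg Complex.im h
  simp at this
  exact hz.ne' this

lemma hcont_integrand (z : ℂ) (hz : 0 < z.im) :
    Continuous (fun θ : ℝ => 4*(Real.sin θ : ℂ)^2/(2*(Real.cos θ : ℂ) - z)) := by
  apply Continuous.div
  · continuity
  · continuity
  · exact fun θ => denom2_ne z hz (Real.cos θ)

lemma doubling (z : ℂ) (hz : 0 < z.im) :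
    ∫ θ in (0:ℝ)..(2*π), 4*(Real.sin θ : ℂ)^2/(2*(Real.cos θ : ℂ) - z)
      = 2 * ∫ θ in (0:ℝ)..π, 4*(Real.sin θ : ℂ)^2/(2*(Real.cos θ : ℂ) - z) := by
  set h : ℝ → ℂ := fun θ => 4*(Real.sin θ : ℂ)^2/(2*(Real.cos θ : ℂ) - z) with hh
  have hc : Continuous h := hcont_integrand z hz
  have hsplit : (∫ θ in (0:ℝ)..π, h θ) + (∫ θ in π..(2*π), h θ) = ∫ θ in (0:ℝ)..(2*π), h θ :=
    intervalIntegral.integral_add_adjacent_intervals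
      (hc.intervalIntegrable _ _) (hc.intervalIntegrable _ _)
  have hcomp : (∫ θ in (0:ℝ)..π, h (2*π - θ)) = ∫ θ in (2*π - π)..(2*π - 0), h θ :=
    intervalIntegral.integral_comp_sub_left h (2*π)
  have heq : (∫ θ in (0:ℝ)..π, h (2*π - θ)) = ∫ θ in (0:ℝ)..π, h θ := by
    apply intervalIntegral.integral_congr
    intro θ _
    simp only [hh]
    rw [Real.cos_two_pi_sub, Real.sin_two_pi_sub]
    push_cast
    ring
  have h1 : (2*π - π) = π := by ring
  have h2 : (2*π - 0) = 2*π := by ring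
  rw [h1, h2, heq] at hcomp
  rw [← hsplit, ← hcomp]
  ring

-- C1 : interval integral equals circle integral
lemma interval_to_circle (z a b : ℂ) (hz : 0 < z.im)
    (hab : a * b = 1) (hzab : a + b = z)
    (ha : ‖a‖ < 1) (hb : 1 < ‖b‖) :
    (∫ θ in (0:ℝ)..(2*π), 4*(Real.sin θ : ℂ)^2/(2*(Real.cos θ : ℂ) - z))
      = ∮ w in C(0, 1), -(w^2-1)^2/(Complex.I*(w^2*((w - a)*(w - b)))) := by
  rw [circleIntegral]
  apply intervalIntegral.integral_congr
  intro θ _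
  simp only [deriv_circleMap, circleMap, Complex.ofReal_one, zero_add, one_mul, smul_eq_mul]
  set w : ℂ := Complex.exp (θ * Complex.I) with hwdef
  set C : ℂ := Complex.cos θ with hC
  set S : ℂ := Complex.sin θ with hS
  have hw : w = C + S * Complex.I := Complex.exp_mul_I _
  have hw1 : w * (C - S * Complex.I) = 1 := by
    have h1 : Complex.exp (-(θ:ℂ) * Complex.I) = C - S*Complex.I := by
      rw [Complex.exp_mul_I, Complex.cos_neg, Complex.sin_neg]; ring
    rw [← h1, ← Complex.exp_add]
    simp
  have hCS : S^2 + C^2 = 1 := Complex.sin_sq_add_cos_sq _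
  have hw0 : w ≠ 0 := Complex.exp_ne_zero _
  have habsw : ‖w‖ = 1 := Complex.norm_exp_ofReal_mul_I θ
  have hwa : w - a ≠ 0 := by
    intro h
    rw [sub_eq_zero] at h
    rw [h] at habsw
    rw [habsw] at ha
    exact lt_irrefl 1 ha
  have hwb : w - b ≠ 0 := by
    intro h
    rw [sub_eq_zero] at h
    rw [h] at habsw
    rw [habsw] at hb
    exact lt_irrefl 1 hb
  have hden : 2*C - z ≠ 0 := by
    rw [hC, ← Complex.ofReal_cos]
    exact (by
      intro h
      have := congrArg Complex.im h
      simp at this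
      exact hz.ne' this)
  have h1 : w^2 - 1 = 2*S*Complex.I*w := by
    rw [hw]
    linear_combination hCS - S^2 * Complex.I_sq
  have h2 : (w - a)*(w - b) = w*(2*C - z) := by
    linear_combination hab - w*hzab + h1 - 2*hw1
  rw [Complex.ofReal_sin, Complex.ofReal_cos, ← hS, ← hC]
  rw [h1, h2]
  field_simp
  linear_combination (4*S^2) * Complex.I_sq

lemma decomp_eqon (z a b : ℂ)
    (hab : a * b = 1) (hzab : a + b = z)
    (ha : ‖a‖ < 1) (hb : 1 < ‖b‖) :
    Set.EqOn (fun w : ℂ => -(w^2-1)^2/(Complex.I*(w^2*((w - a)*(w - b)))))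
      (fun w : ℂ => Complex.I⁻¹ *
        ((((-((w - 0)^(-2:ℤ)) - z * (w - 0)⁻¹) - (a - b) * (w - a)⁻¹)
          - (b - a) * (w - b)⁻¹) - 1)) (sphere (0:ℂ) 1) := by
  intro w hw
  have hw0 : w ≠ 0 := by
    intro h; rw [h] at hw; simp at hw
  have hwa' : w - a ≠ 0 := by
    intro h; rw [sub_eq_zero] at h; rw [h, mem_sphere_zero_iff_norm] at hw
    exact ha.ne hw
  have hwb' : w - b ≠ 0 := by
    intro h; rw [sub_eq_zero] at h; rw [h, mem_sphere_zero_iff_norm] at hw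
    exact hb.ne' hw
  have hD : Complex.I*(w^2*((w - a)*(w - b))) ≠ 0 := by
    apply mul_ne_zero Complex.I_ne_zero
    exact mul_ne_zero (pow_ne_zero 2 hw0) (mul_ne_zero hwa' hwb')
  simp only [sub_zero]
  have hz2 : w^(-2:ℤ) = (w^2)⁻¹ := by
    rw [zpow_neg]
    norm_cast
  rw [hz2, div_eq_iff hD]
  have e0 : Complex.I⁻¹ * Complex.I = 1 := inv_mul_cancel₀ Complex.I_ne_zero
  have e1 : (w^2)⁻¹ * w^2 = 1 := inv_mul_cancel₀ (pow_ne_zero 2 hw0)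
  have e2 : w⁻¹ * w = 1 := inv_mul_cancel₀ hw0
  have e3 : (w - a)⁻¹ * (w - a) = 1 := inv_mul_cancel₀ hwa'
  have e4 : (w - b)⁻¹ * (w - b) = 1 := inv_mul_cancel₀ hwb'
  linear_combination
    (-(((-((w^2)⁻¹) - z * w⁻¹ + (b-a) * (w-a)⁻¹ - (b-a) * (w-b)⁻¹) - 1)
        * (w^2*((w - a)*(w - b))))) * e0
    + ((w-a)*(w-b)) * e1
    + (z*w*(w-a)*(w-b)) * e2
    + (-(b-a)*w^2*(w-b)) * e3
    + ((b-a)*w^2*(w-a)) * e4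
    + (-(3*w^2 - z*w - 1)) * hab
    + (-(w + z*w^2 + w^3 - w^2*(z+a+b))) * hzab

lemma circle_eval (z a b : ℂ)
    (ha : ‖a‖ < 1) (hb : 1 < ‖b‖) :
    (∮ w in C(0, 1), Complex.I⁻¹ *
        ((((-((w - 0)^(-2:ℤ)) - z * (w - 0)⁻¹) - (a - b) * (w - a)⁻¹)
          - (b - a) * (w - b)⁻¹) - 1))
      = 2*π*(b - a) - 2*π*z := by
  have h0s : (0:ℂ) ∉ sphere (0:ℂ) 1 := by simp
  have has : a ∉ sphere (0:ℂ) 1 := by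
    rw [mem_sphere_zero_iff_norm]; exact ha.ne
  have hbs : b ∉ sphere (0:ℂ) 1 := by
    rw [mem_sphere_zero_iff_norm]; exact hb.ne'
  -- integrability of the pieces
  have hne : ∀ (c : ℂ), c ∉ sphere (0:ℂ) 1 → ∀ w ∈ sphere (0:ℂ) 1, w - c ≠ 0 := by
    intro c hc w hw h
    rw [sub_eq_zero] at h
    exact hc (h ▸ hw)
  have i1 : CircleIntegrable (fun w : ℂ => -((w - 0)^(-2:ℤ))) 0 1 := by
    apply ContinuousOn.circleIntegrable (by norm_num)
    intro w hw
    exact ((continuousOn_id.sub continuousOn_const).zpow₀ _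
      (fun x hx => Or.inl (hne 0 h0s x hx))).neg w hw
  have i2 : CircleIntegrable (fun w : ℂ => z * (w - 0)⁻¹) 0 1 := by
    apply ContinuousOn.circleIntegrable (by norm_num)
    exact continuousOn_const.mul (((continuousOn_id.sub continuousOn_const)).inv₀
      (fun x hx => hne 0 h0s x hx))
  have i3 : CircleIntegrable (fun w : ℂ => (a - b) * (w - a)⁻¹) 0 1 := by
    apply ContinuousOn.circleIntegrable (by norm_num)
    exact continuousOn_const.mul (((continuousOn_id.sub continuousOn_const)).inv₀
      (fun x hx => hne a has x hx))
  have i4 : CircleIntegrable (fun w : ℂ => (b - a) * (w - b)⁻¹) 0 1 := by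
    apply ContinuousOn.circleIntegrable (by norm_num)
    exact continuousOn_const.mul (((continuousOn_id.sub continuousOn_const)).inv₀
      (fun x hx => hne b hbs x hx))
  have i5 : CircleIntegrable (fun _ : ℂ => (1:ℂ)) 0 1 := circleIntegrable_const 1 0 1
  have i12 : CircleIntegrable (fun w : ℂ => -((w - 0)^(-2:ℤ)) - z * (w - 0)⁻¹) 0 1 := by
    simpa [sub_eq_add_neg, Pi.add_def, Pi.neg_def] using i1.add i2.neg
  have i123 : CircleIntegrable
      (fun w : ℂ => (-((w - 0)^(-2:ℤ)) - z * (w - 0)⁻¹) - (a - b) * (w - a)⁻¹) 0 1 := by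
    simpa [sub_eq_add_neg, Pi.add_def, Pi.neg_def] using i12.add i3.neg
  have i1234 : CircleIntegrable
      (fun w : ℂ => ((-((w - 0)^(-2:ℤ)) - z * (w - 0)⁻¹) - (a - b) * (w - a)⁻¹)
        - (b - a) * (w - b)⁻¹) 0 1 := by
    simpa [sub_eq_add_neg, Pi.add_def, Pi.neg_def] using i123.add i4.neg
  -- individual values
  have v1 : (∮ w in C(0, 1), (w - 0)^(-2:ℤ)) = 0 :=
    circleIntegral.integral_sub_zpow_of_ne (by norm_num) 0 0 1
  have v2 : (∮ w in C(0, 1), (w - 0)⁻¹) = 2 * π * Complex.I :=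
    circleIntegral.integral_sub_inv_of_mem_ball (by simp)
  have v3 : (∮ w in C(0, 1), (w - a)⁻¹) = 2 * π * Complex.I :=
    circleIntegral.integral_sub_inv_of_mem_ball
      (by rw [mem_ball_zero_iff]; exact ha)
  have v4 : (∮ w in C(0, 1), (w - b)⁻¹) = 0 := by
    apply Complex.circleIntegral_eq_zero_of_differentiable_on_off_countable
      (by norm_num : (0:ℝ) ≤ 1) Set.countable_empty
    · intro w hw
      apply ContinuousAt.continuousWithinAt
      apply ContinuousAt.inv₀ (by fun_prop)
      intro h
      rw [sub_eq_zero] at h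
      rw [mem_closedBall_zero_iff, h] at hw
      linarith
    · intro w hw
      apply DifferentiableAt.inv (by fun_prop)
      intro h
      rw [sub_eq_zero] at h
      rw [Set.mem_diff, mem_ball_zero_iff, h] at hw
      linarith [hw.1]
  have v5 : (∮ _ in C(0, 1), (1:ℂ)) = 0 := by
    have : Set.EqOn (fun _ : ℂ => (1:ℂ)) (fun w : ℂ => (w - 0)^(0:ℤ)) (sphere (0:ℂ) 1) := by
      intro w hw
      have : w ≠ 0 := fun h => by rw [h] at hw; simp at hw
      simp [sub_ne_zero.mpr this]
    rw [circleIntegral.integral_congr (by norm_num) this]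
    exact circleIntegral.integral_sub_zpow_of_ne (by norm_num) 0 0 1
  -- assemble
  rw [circleIntegral.integral_const_mul]
  rw [circleIntegral.integral_sub i1234 i5]
  rw [circleIntegral.integral_sub i123 i4]
  rw [circleIntegral.integral_sub i12 i3]
  rw [circleIntegral.integral_sub i1 i2]
  have v1' : (∮ w in C(0, 1), -((w - 0)^(-2:ℤ))) = 0 := by
    have := circleIntegral.integral_const_mul (-1 : ℂ) (fun w => (w - 0)^(-2:ℤ)) 0 1
    simp only [neg_one_mul] at this
    rw [this, v1]
    simp
  have v2' : (∮ w in C(0, 1), z * (w - 0)⁻¹) = z * (2 * π * Complex.I) := by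
    rw [circleIntegral.integral_const_mul, v2]
  have v3' : (∮ w in C(0, 1), (a - b) * (w - a)⁻¹) = (a - b) * (2 * π * Complex.I) := by
    rw [circleIntegral.integral_const_mul, v3]
  have v4' : (∮ w in C(0, 1), (b - a) * (w - b)⁻¹) = 0 := by
    rw [circleIntegral.integral_const_mul, v4, mul_zero]
  rw [v1', v2', v3', v4', v5]
  have hI2 : Complex.I * Complex.I = -1 := Complex.I_mul_I
  field_simp [Complex.I_ne_zero]
  ring

lemma mSC_closed_form (z : ℂ) (hz : 0 < z.im) :
    mSC z = (z * uSC z - z) / 2 := by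
  set a : ℂ := (z - z * uSC z)/2 with hadef
  set b : ℂ := (z + z * uSC z)/2 with hbdef
  have hab : a * b = 1 := ab_eq_one z hz
  have hzab : a + b = z := by rw [hadef, hbdef]; ring
  have ha : ‖a‖ < 1 := abs_a_lt z hz
  have hb : 1 < ‖b‖ := abs_b_gt z hz
  have hpi : (2*(π:ℂ)) ≠ 0 := by
    simp [Real.pi_ne_zero]
  -- step 1 : pull out the constant
  have step1 : mSC z = (1/(2*(π:ℂ))) * ∫ x in (-2:ℝ)..2, (Real.sqrt (4 - x^2) : ℂ)/((x:ℂ) - z) := by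
    rw [mSC, ← intervalIntegral.integral_const_mul]
    apply intervalIntegral.integral_congr
    intro x _
    push_cast
    ring
  rw [step1, subst_lemma z hz]
  have step2 : (∫ θ in (0:ℝ)..π, 4*(Real.sin θ : ℂ)^2/(2*(Real.cos θ : ℂ) - z))
      = (1/2) * ∫ θ in (0:ℝ)..(2*π), 4*(Real.sin θ : ℂ)^2/(2*(Real.cos θ : ℂ) - z) := by
    rw [doubling z hz]; ring
  rw [step2, interval_to_circle z a b hz hab hzab ha hb,
    circleIntegral.integral_congr (by norm_num) (decomp_eqon z a b hab hzab ha hb),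
    circle_eval z a b ha hb]
  have hba : b - a = z * uSC z := by rw [hadef, hbdef]; ring
  rw [hba]
  field_simp

/-- `m` is complex differentiable on the upper half plane with
`m'(z) = m(z)²/(1 - m(z)²)`. -/
theorem mSC_hasDerivAt (z : ℂ) (hz : 0 < z.im) :
    HasDerivAt mSC (mSC z ^ 2 / (1 - mSC z ^ 2)) z := by
  have hz0 : z ≠ 0 := fun h => by simp [h] at hz
  have hu0 : uSC z ≠ 0 := uSC_ne_zero z hz
  have hu1 : uSC z ≠ 1 := by
    intro h
    have := uSC_sq z
    rw [h] at this
    have h4 : (4:ℂ)/z^2 = 0 := by linear_combination this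
    rw [div_eq_zero_iff] at h4
    rcases h4 with h4 | h4
    · norm_num at h4
    · exact pow_ne_zero 2 hz0 h4
  -- m agrees with the closed form near z
  have hopen : IsOpen {w : ℂ | 0 < w.im} := by
    exact isOpen_lt continuous_const Complex.continuous_im
  have hmem : {w : ℂ | 0 < w.im} ∈ nhds z := hopen.mem_nhds hz
  have heq : mSC =ᶠ[nhds z] (fun w : ℂ => (w * (1 - 4 / w ^ 2) ^ ((2:ℂ)⁻¹) - w)/2) := by
    filter_upwards [hmem] with w hw
    exact mSC_closed_form w hw
  have hder : HasDerivAt mSC ((1 - uSC z)/(2 * uSC z)) z :=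
    (hasDerivAt_gFun z hz).congr_of_eventuallyEq heq
  -- identify the derivative
  have hm : mSC z = (z * uSC z - z) / 2 := mSC_closed_form z hz
  have hzu := zu_sq z hz
  have hden : 1 - mSC z ^ 2 = z^2 * uSC z * (1 - uSC z) / 2 := by
    rw [hm]
    linear_combination (1/4 : ℂ) * hzu
  have hdenne : (1 : ℂ) - mSC z ^ 2 ≠ 0 := by
    rw [hden]
    apply div_ne_zero _ two_ne_zero
    exact mul_ne_zero (mul_ne_zero (pow_ne_zero 2 hz0) hu0) (sub_ne_zero.mpr (Ne.symm hu1))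
  have : mSC z ^ 2 / (1 - mSC z ^ 2) = (1 - uSC z)/(2 * uSC z) := by
    rw [div_eq_div_iff hdenne (by exact mul_ne_zero two_ne_zero hu0), hden, hm]
    field_simp
    ring_nf
  rw [this]
  exact hder
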